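/- For any d > 0 and 0 ≤ j < 2^d, the set g_d^{-1}({0,...,j}) maximizes the number of induced edges of Q^d among all vertex subsets of size j+1; i.e., |I_{Q^d}(g_d^{-1}(0:j))| = I_{Q^d}(j+1). -/

import Mathlib

/-- The binary-reflected Gray code list for `d` bits: the list for `d` bits is obtained
from the list for `d-1` bits by prefixing the original list with `false` and the
reversed list with `true`, then concatenating. -/
def grayList : (d : ℕ) → List (Fin d → Bool)
  | 0 => [fun i => i.elim0]
  | d + 1 => (grayList d).map (Fin.cons false) ++ (grayList d).reverse.map (Fin.cons true)

/-- `grayIdx d w` is the position of the string `w` in the binary-reflected Gray code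
list for `d` bits (the Gray code value `g_d(w)`). -/
def grayIdx (d : ℕ) (w : Fin d → Bool) : ℕ := (grayList d).idxOf w

/-- The hypercube graph `Q^d` on `{0,1}^d`: two strings are adjacent iff they differ
in exactly one coordinate. -/
def Q (d : ℕ) : SimpleGraph (Fin d → Bool) where
  Adj x y := hammingDist x y = 1
  symm := by constructor; intro x y h; rwa [hammingDist_comm]
  loopless := by constructor; intro x h; simp [hammingDist_self] at h

/-- The set `I_G(A)` of edges of `G` with both endpoints in `A`. -/
def inducedEdges {α : Type*} (G : SimpleGraph α) (A : Set α) : Set (Sym2 α) :=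
  {e | e ∈ G.edgeSet ∧ ∀ v ∈ e, v ∈ A}

/-- The number of edges of `G` with both endpoints in `A`. -/
noncomputable def inducedCount {α : Type*} (G : SimpleGraph α) (A : Set α) : ℕ :=
  (inducedEdges G A).ncard

/-- `maxInduced G k` : the maximum number of induced edges over vertex sets of size `k`. -/
noncomputable def maxInduced {α : Type*} (G : SimpleGraph α) (k : ℕ) : ℕ :=
  sSup {n | ∃ A : Set α, A.ncard = k ∧ inducedCount G A = n}

/-- A vertex set is optimal if it maximizes the number of induced edges among sets
of its cardinality. -/
def IsOptimal {α : Type*} (G : SimpleGraph α) (A : Set α) : Prop :=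
  inducedCount G A = maxInduced G A.ncard

/-
Harper's edge-isoperimetric inequality for the hypercube, with the Gray code order as an extremal
order. Put h(0) = h(1) = 0 and h(n) = h(⌊n/2⌋) + h(⌈n/2⌉) + ⌊n/2⌋. Splitting a set A ⊆ Q^(d+1) by
its first coordinate into A₀, A₁ ⊆ Q^d gives e(A) = e(A₀) + e(A₁) + |A₀ ∩ A₁|, so induction on d
together with h(a) + h(b) + min a b ≤ h(a + b) yields e(A) ≤ h(|A|). The Gray code list of Q^(d+1)
is the list of Q^d prefixed by 0 followed by its reversal prefixed by 1, so both slices of an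
initial or a final segment of it are again initial or final segments of the Gray list of Q^d;
induction on d, carried out for both kinds of segments at once, shows that they meet the bound.
-/

-- `edgeBound n` equals `∑ i < n, (number of ones in the binary expansion of i)`.
def edgeBound (n : ℕ) : ℕ :=
  if n < 2 then 0 else edgeBound (n / 2) + edgeBound ((n + 1) / 2) + n / 2
decreasing_by all_goals omega

lemma edgeBound_eq (n : ℕ) :
    edgeBound n = edgeBound (n / 2) + edgeBound ((n + 1) / 2) + n / 2 := by
  rw [edgeBound]
  split_ifs with h
  · interval_cases n <;> simp [edgeBound]
  · rfl

lemma edgeBound_zero : edgeBound 0 = 0 := by simp [edgeBound]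

theorem edgeBound_add_min_le (a b : ℕ) :
    edgeBound a + edgeBound b + min a b ≤ edgeBound (a + b) := by
  rcases Nat.eq_zero_or_pos (min a b) with hmin | hmin
  · rcases Nat.min_eq_zero_iff.mp hmin with rfl | rfl <;> simp [edgeBound_zero]
  have h₁ := edgeBound_add_min_le (a / 2) ((b + 1) / 2)
  have h₂ := edgeBound_add_min_le ((a + 1) / 2) (b / 2)
  have halves : edgeBound (a / 2 + (b + 1) / 2) + edgeBound ((a + 1) / 2 + b / 2) =
      edgeBound ((a + b) / 2) + edgeBound ((a + b + 1) / 2) := by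
    rcases (by omega : (a / 2 + (b + 1) / 2 = (a + b) / 2 ∧ (a + 1) / 2 + b / 2 = (a + b + 1) / 2)
        ∨ (a / 2 + (b + 1) / 2 = (a + b + 1) / 2 ∧ (a + 1) / 2 + b / 2 = (a + b) / 2))
      with ⟨e₁, e₂⟩ | ⟨e₁, e₂⟩ <;> rw [e₁, e₂]
    rw [add_comm]
  rw [edgeBound_eq a, edgeBound_eq b, edgeBound_eq (a + b)]
  omega
termination_by a + b
decreasing_by all_goals omega

lemma edgeBound_two_pow_add (d : ℕ) {s : ℕ} (hs : s ≤ 2 ^ d) :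
    edgeBound (2 ^ d + s) = edgeBound (2 ^ d) + edgeBound s + s := by
  induction d generalizing s with
  | zero => interval_cases s <;> simp [edgeBound]
  | succ d ih =>
    rw [pow_succ] at hs ⊢
    have h₁ := ih (s := s / 2) (by omega)
    have h₂ := ih (s := (s + 1) / 2) (by omega)
    rw [edgeBound_eq (2 ^ d * 2 + s), edgeBound_eq (2 ^ d * 2), edgeBound_eq s,
      show (2 ^ d * 2 + s) / 2 = 2 ^ d + s / 2 by omega,
      show (2 ^ d * 2 + s + 1) / 2 = 2 ^ d + (s + 1) / 2 by omega,
      Nat.mul_div_cancel _ two_pos, show (2 ^ d * 2 + 1) / 2 = 2 ^ d by omega, h₁, h₂]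
    omega

lemma edgeBound_eq_min_add_sub {d k : ℕ} (hk : k ≤ 2 ^ (d + 1)) :
    edgeBound k = edgeBound (min k (2 ^ d)) + edgeBound (k - 2 ^ d) + (k - 2 ^ d) := by
  rcases le_total k (2 ^ d) with h | h
  · simp [h, Nat.sub_eq_zero_of_le h, edgeBound_zero]
  · have := edgeBound_two_pow_add d (s := k - 2 ^ d) (by rw [pow_succ] at hk; omega)
    rw [min_eq_right h]
    rwa [Nat.add_sub_cancel' h] at this

theorem Fin.sum_univ_cons {β M : Type*} [Fintype β] [AddCommMonoid M] {d : ℕ}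
    (f : (Fin (d + 1) → β) → M) : ∑ x, f x = ∑ b, ∑ u, f (Fin.cons b u) := by
  rw [← (Fin.consEquiv fun _ => β).sum_comp, Fintype.sum_prod_type]
  rfl

theorem hammingDist_cons {β : Type*} [DecidableEq β] {d : ℕ} (b c : β) (u v : Fin d → β) :
    hammingDist (Fin.cons b u : Fin (d + 1) → β) (Fin.cons c v) =
      (if b = c then 0 else 1) + hammingDist u v := by
  simp only [hammingDist, Finset.card_filter, Fin.sum_univ_succ, Fin.cons_zero, Fin.cons_succ]
  by_cases h : b = c <;> simp [h]

open Classical in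
theorem two_mul_inducedCount {α : Type*} [Fintype α] (G : SimpleGraph α) (A : Set α) :
    2 * inducedCount G A = ∑ x, ∑ y, if G.Adj x y ∧ x ∈ A ∧ y ∈ A then 1 else 0 := by
  set H := SimpleGraph.fromEdgeSet (inducedEdges G A)
  have hE : H.edgeSet = inducedEdges G A := by
    rw [SimpleGraph.edgeSet_fromEdgeSet, sdiff_eq_left, Set.disjoint_left]
    exact fun e he => G.not_isDiag_of_mem_edgeSet he.1
  have hAdj : ∀ x y, H.Adj x y ↔ G.Adj x y ∧ x ∈ A ∧ y ∈ A := by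
    intro x y
    simpa [H, inducedEdges] using fun h _ _ => h.ne
  rw [inducedCount, ← hE, ← SimpleGraph.coe_edgeFinset, Set.ncard_coe_finset]
  trans (Finset.univ.filter fun p : α × α => H.Adj p.1 p.2).card
  · convert H.two_mul_card_edgeFinset
  · rw [Finset.card_filter, Fintype.sum_prod_type]
    simp only [hAdj]

section Cube

variable {d : ℕ}

lemma Q_adj_cons (b c : Bool) (u v : Fin d → Bool) :
    (Q (d + 1)).Adj (Fin.cons b u) (Fin.cons c v) ↔ b = c ∧ (Q d).Adj u v ∨ b ≠ c ∧ u = v := by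
  change hammingDist _ _ = 1 ↔ b = c ∧ hammingDist u v = 1 ∨ _
  rw [hammingDist_cons, ← hammingDist_eq_zero]
  split_ifs <;> simp [*]

lemma inducedCount_Q_zero (A : Set (Fin 0 → Bool)) : inducedCount (Q 0) A = 0 := by
  rw [inducedCount, Set.ncard_eq_zero, Set.eq_empty_iff_forall_notMem]
  rintro ⟨x, y⟩ ⟨h, -⟩
  exact (Q 0).loopless.irrefl x (Subsingleton.elim y x ▸ h)

def slice (A : Set (Fin (d + 1) → Bool)) (b : Bool) : Set (Fin d → Bool) :=
  {u | Fin.cons b u ∈ A}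

lemma image_cons_slice (A : Set (Fin (d + 1) → Bool)) (b : Bool) :
    Fin.cons b '' slice A b = A ∩ {w | w 0 = b} := by
  ext w
  induction w using Fin.consCases with
  | cons c u =>
    simp only [slice, Set.mem_image, Fin.cons_inj, Set.mem_inter_iff, Set.mem_ofPred_eq,
      Fin.cons_zero]
    aesop

lemma ncard_slice_add_ncard_slice (A : Set (Fin (d + 1) → Bool)) :
    (slice A false).ncard + (slice A true).ncard = A.ncard := by
  have hdiff : A \ {w | w 0 = false} = A ∩ {w | w 0 = true} := by
    ext w
    simp
  rw [← Set.ncard_inter_add_ncard_sdiff_eq_ncard A {w | w 0 = false}, hdiff, ← image_cons_slice,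
    ← image_cons_slice, Set.ncard_image_of_injective _ (Fin.cons_right_injective _),
    Set.ncard_image_of_injective _ (Fin.cons_right_injective _)]

open Classical in
lemma sum_cons_mem_inter (A : Set (Fin (d + 1) → Bool)) (b c : Bool) :
    (∑ u, ∑ v, if u = v ∧ Fin.cons b u ∈ A ∧ Fin.cons c v ∈ A then 1 else 0) =
      (slice A b ∩ slice A c).ncard := by
  simp only [ite_and, Finset.sum_ite_eq, Finset.mem_univ, if_true]
  simp only [← ite_and]
  rw [Finset.sum_boole, Nat.cast_id, ← Set.ncard_coe_finset]
  congr 1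
  ext u
  simp [slice]

lemma inducedCount_Q_succ (A : Set (Fin (d + 1) → Bool)) :
    inducedCount (Q (d + 1)) A = inducedCount (Q d) (slice A false) +
      inducedCount (Q d) (slice A true) + (slice A false ∩ slice A true).ncard := by
  classical
  have h := two_mul_inducedCount (Q (d + 1)) A
  have h₀ : 2 * inducedCount (Q d) (slice A false) =
      ∑ u, ∑ v, if (Q d).Adj u v ∧ Fin.cons false u ∈ A ∧ Fin.cons false v ∈ A then 1 else 0 :=
    two_mul_inducedCount _ _
  have h₁ : 2 * inducedCount (Q d) (slice A true) =
      ∑ u, ∑ v, if (Q d).Adj u v ∧ Fin.cons true u ∈ A ∧ Fin.cons true v ∈ A then 1 else 0 :=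
    two_mul_inducedCount _ _
  -- Split both endpoints by their first coordinate: equal ones give the adjacent pairs of a
  -- slice, different ones the pairs `(Fin.cons b u, Fin.cons (!b) u)`.
  simp only [Fin.sum_univ_cons, Fintype.sum_bool, Finset.sum_add_distrib, Q_adj_cons, ne_eq,
    not_true_eq_false, false_and, or_false, true_and, Bool.false_eq_true, Bool.true_eq_false,
    not_false_eq_true, false_or, sum_cons_mem_inter, Set.inter_comm (slice A true)] at h
  omega

theorem inducedCount_le_edgeBound (A : Set (Fin d → Bool)) :
    inducedCount (Q d) A ≤ edgeBound A.ncard := by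
  induction d with
  | zero => simp [inducedCount_Q_zero]
  | succ d ih =>
    rw [inducedCount_Q_succ, ← ncard_slice_add_ncard_slice]
    calc _ ≤ edgeBound (slice A false).ncard + edgeBound (slice A true).ncard +
          min (slice A false).ncard (slice A true).ncard := by
          gcongr
          · exact ih _
          · exact ih _
          · exact le_min (Set.ncard_le_ncard Set.inter_subset_left)
              (Set.ncard_le_ncard Set.inter_subset_right)
      _ ≤ _ := edgeBound_add_min_le _ _

end Cube

theorem List.idxOf_reverse_add_idxOf {α : Type*} [DecidableEq α] {l : List α} (hl : l.Nodup)
    {a : α} (ha : a ∈ l) : l.reverse.idxOf a + l.idxOf a + 1 = l.length := by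
  have hi := List.idxOf_lt_length_iff.2 ha
  have hrev : l.reverse[l.length - 1 - l.idxOf a]'(by simp; omega) = a := by
    rw [List.getElem_reverse]
    simp only [show l.length - 1 - (l.length - 1 - l.idxOf a) = l.idxOf a by omega,
      List.getElem_idxOf]
  have := (List.nodup_reverse.2 hl).idxOf_getElem (l.length - 1 - l.idxOf a) (by simp; omega)
  rw [hrev] at this
  omega

theorem List.idxOf_map_of_injective {α β : Type*} [DecidableEq α] [DecidableEq β] {f : α → β}
    (hf : Function.Injective f) (l : List α) (a : α) : (l.map f).idxOf (f a) = l.idxOf a := by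
  induction l with
  | nil => rfl
  | cons b l ih => by_cases h : b = a <;> simp [ih, h, hf.ne]

lemma grayList_length (d : ℕ) : (grayList d).length = 2 ^ d := by
  induction d with
  | zero => rfl
  | succ d ih => simp [grayList, ih, pow_succ, mul_two]

lemma mem_grayList {d : ℕ} (w : Fin d → Bool) : w ∈ grayList d := by
  induction d with
  | zero => exact List.mem_singleton.2 (Subsingleton.elim _ _)
  | succ d ih =>
    induction w using Fin.consCases with
    | cons b u => cases b <;> simp [grayList, ih, Fin.cons_right_injective _ |>.eq_iff]

lemma grayList_nodup (d : ℕ) : (grayList d).Nodup := by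
  induction d with
  | zero => simp [grayList]
  | succ d ih =>
    refine List.Nodup.append (ih.map (Fin.cons_right_injective _))
      ((List.nodup_reverse.2 ih).map (Fin.cons_right_injective _)) ?_
    simp [List.disjoint_iff_ne]

lemma grayIdx_lt {d : ℕ} (w : Fin d → Bool) : grayIdx d w < 2 ^ d := by
  rw [grayIdx, ← grayList_length d]
  exact List.idxOf_lt_length_iff.2 (mem_grayList w)

lemma grayIdx_cons_false {d : ℕ} (u : Fin d → Bool) :
    grayIdx (d + 1) (Fin.cons false u) = grayIdx d u := by
  rw [grayIdx, grayList, List.idxOf_append_of_mem (by simp [mem_grayList]),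
    List.idxOf_map_of_injective (Fin.cons_right_injective _), grayIdx]

lemma grayIdx_cons_true {d : ℕ} (u : Fin d → Bool) :
    grayIdx (d + 1) (Fin.cons true u) + grayIdx d u + 1 = 2 ^ (d + 1) := by
  rw [grayIdx, grayList, List.idxOf_append_of_notMem (by simp), List.length_map, grayList_length,
    List.idxOf_map_of_injective (Fin.cons_right_injective _), grayIdx]
  have := List.idxOf_reverse_add_idxOf (grayList_nodup d) (mem_grayList u)
  rw [grayList_length] at this
  rw [pow_succ]
  omega

lemma grayIdx_injective (d : ℕ) : Function.Injective (grayIdx d) :=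
  fun w _ h => (List.idxOf_inj (mem_grayList w)).1 h

lemma range_grayIdx (d : ℕ) : Set.range (grayIdx d) = Set.Iio (2 ^ d) := by
  ext i
  refine ⟨?_, fun hi => ?_⟩
  · rintro ⟨w, rfl⟩
    exact grayIdx_lt w
  · have hi : i < (grayList d).length := by rwa [grayList_length]
    exact ⟨_, (grayList_nodup d).idxOf_getElem i hi⟩

lemma ncard_preimage_grayIdx (d : ℕ) (s : Set ℕ) :
    (grayIdx d ⁻¹' s).ncard = (s ∩ Set.Iio (2 ^ d)).ncard := by
  rw [← range_grayIdx, ← Set.ncard_preimage_of_injective_subset_range (grayIdx_injective d)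
    Set.inter_subset_right, Set.preimage_inter, Set.preimage_range, Set.inter_univ]

def grayPrefix (d k : ℕ) : Set (Fin d → Bool) := grayIdx d ⁻¹' Set.Iio k

def graySuffix (d k : ℕ) : Set (Fin d → Bool) := grayIdx d ⁻¹' Set.Ici (2 ^ d - k)

lemma ncard_graySuffix {d k : ℕ} (hk : k ≤ 2 ^ d) : (graySuffix d k).ncard = k := by
  rw [graySuffix, ncard_preimage_grayIdx, Set.Ici_inter_Iio, Set.ncard_Ico_nat]
  omega

lemma ncard_grayPrefix {d k : ℕ} (hk : k ≤ 2 ^ d) : (grayPrefix d k).ncard = k := by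
  rw [grayPrefix, ncard_preimage_grayIdx, Set.inter_eq_left.2 (Set.Iio_subset_Iio hk),
    Set.ncard_Iio_nat]

lemma slice_grayPrefix_false (d k : ℕ) :
    slice (grayPrefix (d + 1) k) false = grayPrefix d (min k (2 ^ d)) := by
  ext u
  have := grayIdx_lt u
  simp only [slice, grayPrefix, Set.mem_ofPred_eq, Set.mem_preimage, Set.mem_Iio,
    grayIdx_cons_false]
  omega

lemma slice_grayPrefix_true (d k : ℕ) :
    slice (grayPrefix (d + 1) k) true = graySuffix d (k - 2 ^ d) := by
  ext u
  have := grayIdx_lt u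
  have := grayIdx_cons_true u
  simp only [slice, grayPrefix, graySuffix, Set.mem_ofPred_eq, Set.mem_preimage, Set.mem_Iio,
    Set.mem_Ici]
  rw [pow_succ] at *
  omega

lemma slice_graySuffix_false (d k : ℕ) :
    slice (graySuffix (d + 1) k) false = graySuffix d (k - 2 ^ d) := by
  ext u
  have := grayIdx_lt u
  simp only [slice, graySuffix, Set.mem_ofPred_eq, Set.mem_preimage, Set.mem_Ici,
    grayIdx_cons_false]
  rw [pow_succ]
  omega

lemma slice_graySuffix_true (d k : ℕ) :
    slice (graySuffix (d + 1) k) true = grayPrefix d (min k (2 ^ d)) := by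
  ext u
  have := grayIdx_lt u
  have := grayIdx_cons_true u
  simp only [slice, grayPrefix, graySuffix, Set.mem_ofPred_eq, Set.mem_preimage, Set.mem_Iio,
    Set.mem_Ici]
  rw [pow_succ] at *
  omega

lemma graySuffix_subset_grayPrefix (d k : ℕ) :
    graySuffix d (k - 2 ^ d) ⊆ grayPrefix d (min k (2 ^ d)) := by
  intro u hu
  have := grayIdx_lt u
  simp only [grayPrefix, graySuffix, Set.mem_preimage, Set.mem_Iio, Set.mem_Ici] at hu ⊢
  omega

theorem inducedCount_grayPrefix_and_graySuffix {d k : ℕ} (hk : k ≤ 2 ^ d) :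
    inducedCount (Q d) (grayPrefix d k) = edgeBound k ∧
      inducedCount (Q d) (graySuffix d k) = edgeBound k := by
  induction d generalizing k with
  | zero =>
    have : edgeBound k = 0 := by interval_cases k <;> simp [edgeBound]
    simp [inducedCount_Q_zero, this]
  | succ d ih =>
    have hpre := (ih (min_le_right k (2 ^ d))).1
    have hsuf := (ih (k := k - 2 ^ d) (by rw [pow_succ] at hk; omega)).2
    have hinter : (grayPrefix d (min k (2 ^ d)) ∩ graySuffix d (k - 2 ^ d)).ncard = k - 2 ^ d := by
      rw [Set.inter_eq_right.2 (graySuffix_subset_grayPrefix d k),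
        ncard_graySuffix (by rw [pow_succ] at hk; omega)]
    rw [edgeBound_eq_min_add_sub hk, inducedCount_Q_succ, inducedCount_Q_succ,
      slice_grayPrefix_false, slice_grayPrefix_true, slice_graySuffix_false, slice_graySuffix_true,
      Set.inter_comm (graySuffix d _), hinter, hpre, hsuf]
    exact ⟨rfl, by ring⟩

theorem maxInduced_Q_eq_edgeBound {d k : ℕ} (hk : k ≤ 2 ^ d) :
    maxInduced (Q d) k = edgeBound k := by
  refine IsGreatest.csSup_eq ⟨⟨grayPrefix d k, ncard_grayPrefix hk, ?_⟩, ?_⟩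
  · exact (inducedCount_grayPrefix_and_graySuffix hk).1
  · rintro _ ⟨A, rfl, rfl⟩
    exact inducedCount_le_edgeBound A

theorem gray_initial_segment_optimal_general (d : ℕ) (j : ℕ) (hj : j < 2 ^ d) :
    inducedCount (Q d) {w | grayIdx d w ≤ j} = maxInduced (Q d) (j + 1) := by
  have hset : {w | grayIdx d w ≤ j} = grayPrefix d (j + 1) :=
    Set.ext fun _ => Nat.lt_succ_iff.symm
  rw [hset, maxInduced_Q_eq_edgeBound hj, (inducedCount_grayPrefix_and_graySuffix hj).1]

/-- For any `d > 0` and `0 ≤ j < 2^d`, the set `g_d⁻¹({0, …, j})` maximizes the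
number of induced edges of `Q^d` among all vertex subsets of size `j+1`. -/
theorem gray_initial_segment_optimal (d : ℕ) (hd : 0 < d) (j : ℕ) (hj : j < 2 ^ d) :
    inducedCount (Q d) {w | grayIdx d w ≤ j} = maxInduced (Q d) (j + 1) :=
  gray_initial_segment_optimal_general d j hj
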